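/- (Complementary connectedness.) Let P ⊆ ℝ^d be a polytope, let f : ℝ^d → ℝ be a linear functional and c ∈ ℝ. If the set S of extreme points v of P with f(v) ≤ c is nonempty, then S induces a connected subgraph of the graph G_P of P; in particular, removing from G_P the cutset of vertices with f(v) > c does not disconnect the graph on the remaining vertices. -/

import Mathlib

/-!
Perturb `f` to a linear functional `g` that is injective on the vertices and strictly larger on
vertices with `f > c` than on vertices with `f ≤ c`. Every vertex `u` other than the `g`-minimum
`m` then has a neighbour `w` with `g w < g u`: take `l` exposing `u`, generic enough that the
ratios `(l u - l v) / (g u - g v)` over the vertices `v` below `u` are distinct, and let `w`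
minimize this ratio; then `l - r • g`, with `r` the minimal ratio, exposes exactly the edge
`[u, w]`. Descending edges never leave the sublevel set, and they all end at `m`, which lies in it.
-/

open Set

/-- The graph `G_P` of a polytope `P`: vertices are the extreme points of `P`,
with `u` and `v` adjacent iff `u ≠ v` and the closed segment `[u, v]` is an
exposed face of `P`. -/
def polytopeGraph {d : ℕ} (P : Set (Fin d → ℝ)) : SimpleGraph (Fin d → ℝ) where
  Adj u v := u ≠ v ∧ u ∈ P.extremePoints ℝ ∧ v ∈ P.extremePoints ℝ ∧
    IsExposed ℝ P (segment ℝ u v)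
  symm := ⟨by
    rintro u v ⟨h1, h2, h3, h4⟩
    exact ⟨h1.symm, h3, h2, by rwa [segment_symm]⟩⟩
  loopless := ⟨fun u h => h.1 rfl⟩

open Filter Topology


theorem SimpleGraph.induce_connected_of_forall_exists_adj_lt {α β : Type*} [Preorder β]
    {G : SimpleGraph α} {s : Set α} (hs : s.Finite) (g : α → β) {m : α} (hm : m ∈ s)
    (h : ∀ u ∈ s, u ≠ m → ∃ w ∈ s, G.Adj u w ∧ g w < g u) : (G.induce s).Connected := by
  have hwf : s.WellFoundedOn (Function.onFun (· < ·) g) :=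
    wellFoundedOn_image.1 (hs.image g).wellFoundedOn
  refine (connected_iff_exists_forall_reachable _).2 ⟨⟨m, hm⟩, fun ⟨u, hu⟩ => ?_⟩
  refine hwf.induction hu (P := fun u => ∀ hu : u ∈ s, (G.induce s).Reachable ⟨m, hm⟩ ⟨u, hu⟩)
    (fun u hu ih _ => ?_) hu
  rcases eq_or_ne u m with rfl | hum
  · rfl
  obtain ⟨w, hw, hadj, hlt⟩ := h u hu hum
  exact (ih w hw hlt hw).trans (SimpleGraph.Adj.reachable (G := G.induce s) hadj.symm)

section Module

variable {E : Type*} [AddCommGroup E] [Module ℝ E]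

theorem exists_dual_forall_pos_and_ne_zero (l₀ : E →ₗ[ℝ] ℝ) (F Z : Finset E) (hF : ∀ x ∈ F, 0 < l₀ x) (hZ : ∀ z ∈ Z, z ≠ 0) :
    ∃ l : E →ₗ[ℝ] ℝ, (∀ x ∈ F, 0 < l x) ∧ ∀ z ∈ Z, l z ≠ 0 := by
  obtain ⟨ψ, hψ⟩ := Module.exists_dual_forall_apply_ne_zero (K := ℝ) ((↑) : Z → E)
    (fun z => hZ z z.2)
  have hlim : ∀ x, Tendsto (fun t : ℝ => l₀ x + t * ψ x) (𝓝[≠] 0) (𝓝 (l₀ x)) := fun x => by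
    simpa using ((continuous_const.add (continuous_id.mul continuous_const)).tendsto
      (0 : ℝ)).mono_left (nhdsWithin_le_nhds (s := {0}ᶜ)) (f := fun t : ℝ => l₀ x + t * ψ x)
  have hpos : ∀ x ∈ F, ∀ᶠ t in 𝓝[≠] (0 : ℝ), 0 < l₀ x + t * ψ x := fun x hx =>
    (hlim x).eventually (lt_mem_nhds (hF x hx))
  have hne : ∀ z ∈ Z, ∀ᶠ t in 𝓝[≠] (0 : ℝ), l₀ z + t * ψ z ≠ 0 := by
    intro z hz
    by_cases h : l₀ z = 0
    · filter_upwards [self_mem_nhdsWithin] with t ht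
      simpa [h] using ⟨ht, hψ ⟨z, hz⟩⟩
    · exact (hlim z).eventually_ne h
  obtain ⟨t, htF, htZ⟩ :=
    ((eventually_all_finset F).2 hpos).and ((eventually_all_finset Z).2 hne) |>.exists
  exact ⟨l₀ + t • ψ, by simpa using htF, by simpa using htZ⟩

theorem mem_segment_of_smul_sub_eq_smul_sub {u v w : E} {a b : ℝ} (ha : 0 ≤ a) (hb : 0 < b)
    (hab : a ≤ b) (h : a • (u - v) = b • (u - w)) : w ∈ segment ℝ u v := by
  have hw : w = u - (a / b) • (u - v) := by
    rw [div_eq_inv_mul, mul_smul, h, smul_smul, inv_mul_cancel₀ hb.ne', one_smul, sub_sub_cancel]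
  refine ⟨1 - a / b, a / b, sub_nonneg.2 ((div_le_one hb).2 hab), div_nonneg ha hb.le,
    sub_add_cancel 1 _, ?_⟩
  rw [hw]
  module

theorem eq_of_smul_sub_eq_smul_sub {A : Set E} {u v w : E} (hu : u ∈ A)
    (hv : v ∈ A.extremePoints ℝ) (hw : w ∈ A.extremePoints ℝ) (hvu : v ≠ u) (hwu : w ≠ u)
    {a b : ℝ} (ha : 0 < a) (hb : 0 < b) (h : a • (u - v) = b • (u - w)) : v = w := by
  rcases le_total a b with hab | hab
  · rcases (mem_extremePoints_iff_forall_segment.1 hw).2 u hu v hv.1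
      (mem_segment_of_smul_sub_eq_smul_sub ha.le hb hab h) with h' | h'
    · exact absurd h'.symm hwu
    · exact h'
  · rcases (mem_extremePoints_iff_forall_segment.1 hv).2 u hu w hw.1
      (mem_segment_of_smul_sub_eq_smul_sub hb.le ha hab h.symm) with h' | h'
    · exact absurd h'.symm hvu
    · exact h'.symm

theorem exists_argmax_eq_pair {V : Finset E} {u : E} {l g : E →ₗ[ℝ] ℝ}
    (hl : ∀ v ∈ V, v ≠ u → l v < l u) (hW : ∃ w ∈ V, g w < g u)
    (hinj : ∀ v ∈ V, ∀ v' ∈ V, g v < g u → g v' < g u →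
      (l u - l v) / (g u - g v) = (l u - l v') / (g u - g v') → v = v') :
    ∃ w ∈ V, g w < g u ∧ ∃ h : E →ₗ[ℝ] ℝ, h w = h u ∧ ∀ v ∈ V, v ≠ u → v ≠ w → h v < h u := by
  classical
  set r : E → ℝ := fun v => (l u - l v) / (g u - g v)
  obtain ⟨w, hw, hwmin⟩ := (V.filter (g · < g u)).exists_min_image r
    (by simpa [Finset.filter_nonempty_iff] using hW)
  rw [Finset.mem_filter] at hw
  have hgw : 0 < g u - g w := sub_pos.2 hw.2
  have hrw : 0 < r w := div_pos (sub_pos.2 (hl w hw.1 (ne_of_apply_ne g hw.2.ne))) hgw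
  refine ⟨w, hw.1, hw.2, l - r w • g, ?_, fun v hv hvu hvw => ?_⟩
  · simp only [LinearMap.sub_apply, LinearMap.smul_apply, smul_eq_mul, r]
    field_simp
    ring
  simp only [LinearMap.sub_apply, LinearMap.smul_apply, smul_eq_mul]
  rcases lt_or_ge (g v) (g u) with hvu' | hvu'
  · have hrv : r w < r v := (hwmin v (Finset.mem_filter.2 ⟨hv, hvu'⟩)).lt_of_ne
      fun h => hvw (hinj v hv w hw.1 hvu' hw.2 h.symm)
    have := (lt_div_iff₀ (sub_pos.2 hvu')).1 hrv
    linarith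
  · nlinarith [hl v hv hvu]

theorem exists_injOn_and_lt_of_le_of_lt (V : Finset E) (f : E →ₗ[ℝ] ℝ) (c : ℝ) :
    ∃ g : E →ₗ[ℝ] ℝ, Set.InjOn g V ∧ ∀ x ∈ V, ∀ y ∈ V, f x ≤ c → c < f y → g x < g y := by
  classical
  obtain ⟨g, hcut, hinj⟩ := exists_dual_forall_pos_and_ne_zero f
    ((V.filter (f · ≤ c) ×ˢ V.filter (c < f ·)).image fun p => p.2 - p.1)
    (V.offDiag.image fun p => p.1 - p.2)
    (by
      simp only [Finset.mem_image, Finset.mem_product, Finset.mem_filter]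
      rintro _ ⟨⟨x, y⟩, ⟨⟨-, hx⟩, -, hy⟩, rfl⟩
      simpa using hx.trans_lt hy)
    (by
      simp only [Finset.mem_image, Finset.mem_offDiag]
      rintro _ ⟨⟨x, y⟩, ⟨-, -, hxy⟩, rfl⟩
      exact sub_ne_zero.2 hxy)
  refine ⟨g, fun x hx y hy hxy => ?_, fun x hx y hy hfx hfy => ?_⟩
  · by_contra hne
    exact hinj (x - y) (Finset.mem_image.2 ⟨(x, y), Finset.mem_offDiag.2 ⟨hx, hy, hne⟩, rfl⟩)
      (by simp [hxy])
  · simpa using hcut (y - x) (Finset.mem_image.2 ⟨(x, y), Finset.mem_product.2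
      ⟨Finset.mem_filter.2 ⟨hx, hfx⟩, Finset.mem_filter.2 ⟨hy, hfy⟩⟩, rfl⟩)

end Module

section Geometry

variable {E : Type*} [NormedAddCommGroup E] [NormedSpace ℝ E]

theorem exists_forall_lt_of_mem_extremePoints_convexHull {V : Set E} (hV : V.Finite) {u : E}
    (hu : u ∈ (convexHull ℝ V).extremePoints ℝ) :
    ∃ l : E →L[ℝ] ℝ, ∀ v ∈ V, v ≠ u → l v < l u := by
  have hu' : u ∉ convexHull ℝ (V \ {u}) := fun h =>
    ((convex_convexHull ℝ V).mem_extremePoints_iff_mem_sdiff_convexHull_sdiff.1 hu).2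
      (convexHull_mono (sdiff_subset_sdiff_left (subset_convexHull ℝ V)) h)
  obtain ⟨l, b, hlb, hbu⟩ := geometric_hahn_banach_closed_point (convex_convexHull ℝ _)
    (hV.sdiff.isCompact_convexHull (𝕜 := ℝ)).isClosed hu'
  exact ⟨l, fun v hv hvu => (hlb v (subset_convexHull ℝ _ ⟨hv, hvu⟩)).trans hbu⟩

theorem IsExposed.subset_convexHull_inter {V B : Set E} (hV : V.Finite)
    (hB : IsExposed ℝ (convexHull ℝ V) B) : B ⊆ convexHull ℝ (B ∩ V) := by
  have hBcompact : IsCompact B := hB.isCompact (hV.isCompact_convexHull (𝕜 := ℝ))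
  have hext : B.extremePoints ℝ ⊆ B ∩ V := by
    rw [hB.isExtreme.extremePoints_eq]
    exact inter_subset_inter_right _ extremePoints_convexHull_subset
  calc B = closure (convexHull ℝ (B.extremePoints ℝ)) :=
        (closure_convexHull_extremePoints hBcompact (hB.convex (convex_convexHull ℝ V))).symm
    _ ⊆ closure (convexHull ℝ (B ∩ V)) := closure_mono (convexHull_mono hext)
    _ = convexHull ℝ (B ∩ V) :=
        ((hV.subset inter_subset_right).isCompact_convexHull (𝕜 := ℝ)).isClosed.closure_eq

theorem isExposed_segment_of_forall_lt [FiniteDimensional ℝ E] {V : Set E} (hV : V.Finite)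
    {u w : E} (hu : u ∈ V) (hw : w ∈ V) (h : E →ₗ[ℝ] ℝ) (hhw : h w = h u)
    (hlt : ∀ v ∈ V, v ≠ u → v ≠ w → h v < h u) :
    IsExposed ℝ (convexHull ℝ V) (segment ℝ u w) := by
  set P := convexHull ℝ V
  have hle : ∀ v ∈ V, h v ≤ h u := fun v hv => by
    by_cases hvu : v = u
    · rw [hvu]
    by_cases hvw : v = w
    · rw [hvw, hhw]
    exact (hlt v hv hvu hvw).le
  have hleP : ∀ y ∈ P, h y ≤ h u := fun y hy =>
    convexHull_min hle (convex_halfSpace_le h.isLinear (h u)) hy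
  set hc := LinearMap.toContinuousLinearMap h
  have hseg : segment ℝ u w = hc.toExposed P := by
    refine Subset.antisymm (fun x hx => ⟨?_, fun y hy => ?_⟩) fun x hx => ?_
    · exact (convex_convexHull ℝ V).segment_subset (subset_convexHull ℝ V hu)
        (subset_convexHull ℝ V hw) hx
    · obtain ⟨a, b, -, -, hab, rfl⟩ := hx
      simpa [hc, hhw, ← add_mul, hab] using hleP y hy
    · rw [← convexHull_pair]
      refine convexHull_mono ?_
        ((ContinuousLinearMap.toExposed.isExposed (l := hc)).subset_convexHull_inter hV hx)
      rintro v ⟨hvB, hv⟩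
      by_contra hvuw
      simp only [mem_insert_iff, mem_singleton_iff, not_or] at hvuw
      exact (hlt v hv hvuw.1 hvuw.2).not_ge (hvB.2 u (subset_convexHull ℝ V hu))
  exact hseg ▸ ContinuousLinearMap.toExposed.isExposed

theorem Set.Finite.convexHull_extremePoints_convexHull {S : Set E} (hS : S.Finite) :
    convexHull ℝ ((convexHull ℝ S).extremePoints ℝ) = convexHull ℝ S := by
  have hfin : ((convexHull ℝ S).extremePoints ℝ).Finite :=
    hS.subset extremePoints_convexHull_subset
  rw [← (hfin.isCompact_convexHull (𝕜 := ℝ)).isClosed.closure_eq]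
  exact closure_convexHull_extremePoints (hS.isCompact_convexHull (𝕜 := ℝ))
    (convex_convexHull ℝ S)

theorem exists_isExposed_segment_of_lt [FiniteDimensional ℝ E] {V : Finset E}
    (hV : (convexHull ℝ (V : Set E)).extremePoints ℝ = V) (g : E →ₗ[ℝ] ℝ) {u w₀ : E}
    (hu : u ∈ V) (hw₀ : w₀ ∈ V) (hlt : g w₀ < g u) :
    ∃ w ∈ V, g w < g u ∧ IsExposed ℝ (convexHull ℝ (V : Set E)) (segment ℝ u w) := by
  classical
  have hext : ∀ v ∈ V, v ∈ (convexHull ℝ (V : Set E)).extremePoints ℝ := fun v hv => by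
    rwa [hV]
  obtain ⟨l₀, hl₀⟩ := exists_forall_lt_of_mem_extremePoints_convexHull V.finite_toSet (hext u hu)
  -- `l (tie (v, v')) = 0` iff `v` and `v'` have the same ratio in `exists_argmax_eq_pair`.
  set tie : E × E → E := fun p => (g u - g p.2) • (u - p.1) - (g u - g p.1) • (u - p.2)
  have htie : ∀ p ∈ (V.filter (g · < g u)).offDiag, tie p ≠ 0 := by
    simp only [Finset.mem_offDiag, Finset.mem_filter]
    rintro ⟨v, v'⟩ ⟨⟨hv, hvu⟩, ⟨hv', hv'u⟩, hne⟩ h0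
    exact hne (eq_of_smul_sub_eq_smul_sub (subset_convexHull ℝ _ hu) (hext v hv) (hext v' hv')
      (ne_of_apply_ne g hvu.ne) (ne_of_apply_ne g hv'u.ne) (sub_pos.2 hv'u) (sub_pos.2 hvu)
      (sub_eq_zero.1 h0))
  obtain ⟨l, hlpos, hltie⟩ := exists_dual_forall_pos_and_ne_zero (l₀ : E →ₗ[ℝ] ℝ)
    ((V.erase u).image (u - ·)) ((V.filter (g · < g u)).offDiag.image tie)
    (by
      simp only [Finset.mem_image, Finset.mem_erase]
      rintro _ ⟨v, ⟨hvu, hv⟩, rfl⟩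
      simpa using hl₀ v hv hvu)
    (by
      simp only [Finset.mem_image]
      rintro _ ⟨p, hp, rfl⟩
      exact htie p hp)
  have hl : ∀ v ∈ V, v ≠ u → l v < l u := fun v hv hvu => by
    simpa using hlpos (u - v) (Finset.mem_image_of_mem _ (Finset.mem_erase.2 ⟨hvu, hv⟩))
  have hinj : ∀ v ∈ V, ∀ v' ∈ V, g v < g u → g v' < g u →
      (l u - l v) / (g u - g v) = (l u - l v') / (g u - g v') → v = v' := by
    intro v hv v' hv' hvu hv'u hr
    by_contra hne
    refine hltie (tie (v, v')) (Finset.mem_image_of_mem _ (Finset.mem_offDiag.2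
      ⟨Finset.mem_filter.2 ⟨hv, hvu⟩, Finset.mem_filter.2 ⟨hv', hv'u⟩, hne⟩)) ?_
    rw [div_eq_div_iff (sub_pos.2 hvu).ne' (sub_pos.2 hv'u).ne'] at hr
    simp only [tie, map_sub, map_smul, smul_eq_mul]
    linear_combination hr
  obtain ⟨w, hw, hwlt, h, hhw, hhlt⟩ := exists_argmax_eq_pair hl ⟨w₀, hw₀, hlt⟩ hinj
  exact ⟨w, hw, hwlt, isExposed_segment_of_forall_lt V.finite_toSet hu hw h hhw hhlt⟩

end Geometry

/-- Complementary connectedness: if `P = conv S` is a polytope (`S` finite) and the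
set of extreme points `v` of `P` with `f v ≤ c` is nonempty, then this set induces a
connected subgraph of the graph of `P`; i.e. removing the cutset `{v : f v > c}` does
not disconnect the graph on the remaining vertices. -/
theorem complement_of_cutset_connected (d : ℕ) (S : Set (Fin d → ℝ)) (hS : S.Finite)
    (f : (Fin d → ℝ) →ₗ[ℝ] ℝ) (c : ℝ)
    (hne : {v ∈ (convexHull ℝ S).extremePoints ℝ | f v ≤ c}.Nonempty) :
    ((polytopeGraph (convexHull ℝ S)).induce
      {v ∈ (convexHull ℝ S).extremePoints ℝ | f v ≤ c}).Connected := by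
  set P := convexHull ℝ S
  have hfin : (P.extremePoints ℝ).Finite := hS.subset extremePoints_convexHull_subset
  set V := hfin.toFinset
  have hPV : convexHull ℝ (V : Set (Fin d → ℝ)) = P := by
    rw [hfin.coe_toFinset, hS.convexHull_extremePoints_convexHull]
  have hV : (convexHull ℝ (V : Set (Fin d → ℝ))).extremePoints ℝ = V := by
    rw [hPV, hfin.coe_toFinset]
  obtain ⟨g, hginj, hgcut⟩ := exists_injOn_and_lt_of_le_of_lt V f c
  obtain ⟨x, hx, hfx⟩ := hne
  obtain ⟨m, hm, hmin⟩ := V.exists_min_image g ⟨x, hfin.mem_toFinset.2 hx⟩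
  have hfm : f m ≤ c := not_lt.1 fun hcm =>
    (hmin x (hfin.mem_toFinset.2 hx)).not_gt (hgcut x (hfin.mem_toFinset.2 hx) m hm hfx hcm)
  refine SimpleGraph.induce_connected_of_forall_exists_adj_lt (hfin.subset (sep_subset _ _)) g
    ⟨hfin.mem_toFinset.1 hm, hfm⟩ ?_
  rintro u ⟨hu, hfu⟩ hum
  have huV : u ∈ V := hfin.mem_toFinset.2 hu
  obtain ⟨w, hwV, hwlt, hexp⟩ := exists_isExposed_segment_of_lt hV g huV hm
    ((hmin u huV).lt_of_ne fun h => hum (hginj hm huV h).symm)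
  have hw : w ∈ P.extremePoints ℝ := hfin.mem_toFinset.1 hwV
  exact ⟨w, ⟨hw, not_lt.1 fun hcw => (hgcut u huV w hwV hfu hcw).not_gt hwlt⟩,
    ⟨fun h => hwlt.ne' (congrArg g h), hu, hw, hPV ▸ hexp⟩, hwlt⟩
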